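/- arXiv:1708.03949 — 4 statements merged into one kernel-verified Lean document; each statement's English description precedes it below -/
import Mathlib

section
/- If F: X → ℝ≥0 is differentiable, monotone, and weakly DR-submodular with parameter γ (i.e., ∇F(x) ≥ γ∇F(y) componentwise for all x ≤ y), then for any x, z in X with x ≤ z, F(z) - F(x) ≤ (1/γ) ⟨∇F(x), z - x⟩. -/
/-- For a differentiable, monotone, weakly DR-submodular function `F` with
parameter `γ` on a product of compact intervals `X ⊆ ℝ₊ⁿ`, for all `x ≤ z` in `X`,
`F z - F x ≤ (1/γ) ⟨∇F x, z - x⟩`. -/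
theorem stmt_0 (n : ℕ) (a b : Fin n → ℝ) (ha : ∀ i, 0 ≤ a i)
    (X : Set (EuclideanSpace ℝ (Fin n)))
    (hX : X = {x : EuclideanSpace ℝ (Fin n) | ∀ i, x i ∈ Set.Icc (a i) (b i)})
    (F : EuclideanSpace ℝ (Fin n) → ℝ)
    (g : EuclideanSpace ℝ (Fin n) → EuclideanSpace ℝ (Fin n))
    (hF0 : ∀ x ∈ X, 0 ≤ F x)
    (hdiff : ∀ x ∈ X, HasGradientAt F (g x) x)
    (hmono : ∀ x ∈ X, ∀ y ∈ X, (∀ i, x i ≤ y i) → F x ≤ F y)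
    (γ : ℝ) (hγ : 0 < γ)
    (hweak : ∀ x ∈ X, ∀ y ∈ X, (∀ i, x i ≤ y i) → ∀ i, γ * g y i ≤ g x i) :
    ∀ x ∈ X, ∀ z ∈ X, (∀ i, x i ≤ z i) →
      F z - F x ≤ (1 / γ) * ∑ i, g x i * (z i - x i) := by
  intro x hx z hz hxz
  set d : EuclideanSpace ℝ (Fin n) := z - x with hd
  set L : ℝ → EuclideanSpace ℝ (Fin n) := fun t => x + t • d with hLdef
  have hdnn : ∀ i, 0 ≤ d i := fun i => by
    simp only [hd, PiLp.sub_apply]; linarith [hxz i]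
  have hLcoord : ∀ t i, L t i = x i + t * d i := by
    intro t i
    simp [hLdef, PiLp.add_apply, PiLp.smul_apply, smul_eq_mul]
  have hxmem := hX ▸ hx
  have hzmem := hX ▸ hz
  have hLmem : ∀ t ∈ Set.Icc (0:ℝ) 1, L t ∈ X := by
    intro t ht
    rw [hX]
    intro i
    have h1 := (hxmem i).1
    have h2 := (hzmem i).2
    have hdi := hdnn i
    have hdi' : d i = z i - x i := by simp [hd, PiLp.sub_apply]
    constructor
    · rw [hLcoord]; nlinarith [ht.1]
    · rw [hLcoord, hdi']; nlinarith [ht.2]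
  have hxle : ∀ t ∈ Set.Icc (0:ℝ) 1, ∀ i, x i ≤ L t i := by
    intro t ht i
    rw [hLcoord]
    nlinarith [hdnn i, ht.1]
  have hderiv : ∀ t ∈ Set.Icc (0:ℝ) 1,
      HasDerivAt (fun s => F (L s)) (∑ i, g (L t) i * d i) t := by
    intro t ht
    have hline : HasDerivAt L d t := by
      have : HasDerivAt (fun s : ℝ => s • d) ((1:ℝ) • d) t :=
        (hasDerivAt_id t).smul_const d
      simpa [hLdef] using this.const_add x
    have hgrad := (hdiff (L t) (hLmem t ht)).hasFDerivAt
    have := hgrad.comp_hasDerivAt t hline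
    have heq : (InnerProductSpace.toDual ℝ (EuclideanSpace ℝ (Fin n)) (g (L t))) d
        = ∑ i, g (L t) i * d i := by
      rw [InnerProductSpace.toDual_apply_apply]
      simp [PiLp.inner_apply, RCLike.inner_apply, mul_comm]
    rw [heq] at this
    exact this
  have hcont : ContinuousOn (fun s => F (L s)) (Set.Icc (0:ℝ) 1) := by
    intro t ht
    exact ((hderiv t ht).continuousAt).continuousWithinAt
  obtain ⟨c, hc, hceq⟩ := exists_hasDerivAt_eq_slope (fun s => F (L s))
    (fun t => ∑ i, g (L t) i * d i) one_pos hcont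
    (fun t ht => hderiv t (Set.mem_Icc_of_Ioo ht))
  have hL0 : L 0 = x := by simp [hLdef]
  have hL1 : L 1 = z := by simp [hLdef, hd]
  have hc' : c ∈ Set.Icc (0:ℝ) 1 := Set.mem_Icc_of_Ioo hc
  have hFz : F z - F x = ∑ i, g (L c) i * d i := by
    rw [hceq, hL0, hL1]; ring
  rw [hFz]
  have hbound : ∀ i, g (L c) i * d i ≤ (1 / γ) * (g x i * d i) := by
    intro i
    have hw := hweak x hx (L c) (hLmem c hc') (hxle c hc') i
    have hdi := hdnn i
    rw [div_mul_eq_mul_div, le_div_iff₀ hγ]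
    nlinarith
  calc ∑ i, g (L c) i * d i ≤ ∑ i, (1 / γ) * (g x i * d i) :=
        Finset.sum_le_sum fun i _ => hbound i
    _ = (1 / γ) * ∑ i, g x i * (z i - x i) := by
        rw [← Finset.mul_sum]
        congr 1
end

section
/- If F: X → ℝ≥0 is differentiable, monotone, and weakly DR-submodular with parameter γ, then for any x, z in X with x ≤ z, F(z) - F(x) ≥ γ ⟨∇F(z), z - x⟩. -/
open Set

namespace EuclideanSpace

variable {ι : Type*}

theorem convex_setOf_forall_mem_Icc [Fintype ι] (a b : ι → ℝ) :
    Convex ℝ {x : EuclideanSpace ℝ ι | ∀ i, x i ∈ Icc (a i) (b i)} := by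
  simp only [ofPred_forall]
  exact convex_iInter fun i => (convex_Icc (a i) (b i)).is_linear_preimage (proj i).isLinear

theorem apply_le_of_mem_segment {x y c : EuclideanSpace ℝ ι}
    (hc : c ∈ segment ℝ x y) (hxy : ∀ i, x i ≤ y i) (i : ι) : c i ≤ y i := by
  obtain ⟨s, t, hs, ht, hst, rfl⟩ := hc
  have : s * x i + t * y i ≤ s * y i + t * y i := by gcongr; exact hxy i
  simpa [← add_mul, hst] using this

end EuclideanSpace

/-- By the mean value theorem `F z - F x = ⟪∇F c, z - x⟫` for some `c` between `x` and `z`,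
and weak DR-submodularity bounds `∇F c` below by `γ ∇F z` since `c ≤ z`. -/
theorem mul_gradient_dotProduct_sub_le_sub_of_weakDRSubmodularOn {ι : Type*} [Fintype ι]
    {s : Set (EuclideanSpace ℝ ι)} (hs : Convex ℝ s)
    {F : EuclideanSpace ℝ ι → ℝ} {g : EuclideanSpace ℝ ι → EuclideanSpace ℝ ι} {γ : ℝ}
    (hdiff : ∀ x ∈ s, HasGradientAt F (g x) x)
    (hweak : ∀ x ∈ s, ∀ y ∈ s, (∀ i, x i ≤ y i) → ∀ i, γ * g y i ≤ g x i)
    {x z : EuclideanSpace ℝ ι} (hx : x ∈ s) (hz : z ∈ s) (hxz : ∀ i, x i ≤ z i) :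
    γ * ∑ i, g z i * (z i - x i) ≤ F z - F x := by
  obtain ⟨c, hc, hmvt⟩ := domain_mvt
    (fun y hy => (hasGradientAt_iff_hasFDerivAt.mp (hdiff y hy)).hasFDerivWithinAt) hs hx hz
  have hcz : ∀ i, γ * g z i ≤ g c i :=
    hweak c (hs.segment_subset hx hz hc) z hz (EuclideanSpace.apply_le_of_mem_segment hc hxz)
  rw [hmvt, InnerProductSpace.toDual_apply_apply, PiLp.inner_apply, Finset.mul_sum]
  refine Finset.sum_le_sum fun i _ => ?_
  rw [← mul_assoc, PiLp.sub_apply, Real.inner_apply]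
  exact mul_le_mul_of_nonneg_right (hcz i) (sub_nonneg.mpr (hxz i))

theorem stmt_1_general (n : ℕ) (a b : Fin n → ℝ)
    (X : Set (EuclideanSpace ℝ (Fin n)))
    (hX : X = {x : EuclideanSpace ℝ (Fin n) | ∀ i, x i ∈ Set.Icc (a i) (b i)})
    (F : EuclideanSpace ℝ (Fin n) → ℝ)
    (g : EuclideanSpace ℝ (Fin n) → EuclideanSpace ℝ (Fin n))
    (hdiff : ∀ x ∈ X, HasGradientAt F (g x) x)
    (γ : ℝ)
    (hweak : ∀ x ∈ X, ∀ y ∈ X, (∀ i, x i ≤ y i) → ∀ i, γ * g y i ≤ g x i) :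
    ∀ x ∈ X, ∀ z ∈ X, (∀ i, x i ≤ z i) →
      γ * ∑ i, g z i * (z i - x i) ≤ F z - F x := by
  subst hX
  exact fun x hx z hz hxz => mul_gradient_dotProduct_sub_le_sub_of_weakDRSubmodularOn
    (EuclideanSpace.convex_setOf_forall_mem_Icc a b) hdiff hweak hx hz hxz

/-- For a differentiable, monotone, weakly DR-submodular function `F` with
parameter `γ` on a product of compact intervals `X ⊆ ℝ₊ⁿ`, for all `x ≤ z` in `X`,
`F z - F x ≤ (1/γ) ⟨∇F x, z - x⟩`. -/
theorem stmt_1 (n : ℕ) (a b : Fin n → ℝ) (ha : ∀ i, 0 ≤ a i)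
    (X : Set (EuclideanSpace ℝ (Fin n)))
    (hX : X = {x : EuclideanSpace ℝ (Fin n) | ∀ i, x i ∈ Set.Icc (a i) (b i)})
    (F : EuclideanSpace ℝ (Fin n) → ℝ)
    (g : EuclideanSpace ℝ (Fin n) → EuclideanSpace ℝ (Fin n))
    (hF0 : ∀ x ∈ X, 0 ≤ F x)
    (hdiff : ∀ x ∈ X, HasGradientAt F (g x) x)
    (hmono : ∀ x ∈ X, ∀ y ∈ X, (∀ i, x i ≤ y i) → F x ≤ F y)
    (γ : ℝ) (hγ : 0 < γ)
    (hweak : ∀ x ∈ X, ∀ y ∈ X, (∀ i, x i ≤ y i) → ∀ i, γ * g y i ≤ g x i) :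
    ∀ x ∈ X, ∀ z ∈ X, (∀ i, x i ≤ z i) →
      γ * ∑ i, g z i * (z i - x i) ≤ F z - F x :=
  stmt_1_general n a b X hX F g hdiff γ hweak
end

section
/- If F: X → ℝ≥0 is differentiable, monotone, and weakly DR-submodular with parameter γ, then for all x, y in X, F(y) - (1 + 1/γ²)F(x) ≤ (1/γ) ⟨∇F(x), y - x⟩. -/
/-! Write `p = x ∨ y` and `q = x ∧ y`, so that `y - x = (p - x) - (x - q)` with both brackets
nonnegative. The mean value theorem on the segments `[x, p]` and `[q, x]`, together with weak
DR-submodularity (the gradient at `x` dominates `γ` times the gradient above `x` and is dominated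
by `1/γ` times the gradient below `x`), gives
`γ (F p - F x) ≤ ⟨∇F x, p - x⟩` and `γ ⟨∇F x, x - q⟩ ≤ F x - F q`.
Monotonicity (`F y ≤ F p`) and nonnegativity (`0 ≤ F q`) then yield
`γ ⟨∇F x, y - x⟩ ≥ γ² (F y - F x) - F x`. -/

open Set

section Box

variable {ι : Type*} {a b : ι → ℝ} {x y : EuclideanSpace ℝ ι}

def box (a b : ι → ℝ) : Set (EuclideanSpace ℝ ι) := {x | ∀ i, x i ∈ Icc (a i) (b i)}

lemma convex_box : Convex ℝ (box a b) := by
  intro x hx y hy s t hs ht hst i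
  simpa using convex_Icc (a i) (b i) (hx i) (hy i) hs ht hst

lemma sup_mem_box (hx : x ∈ box a b) (hy : y ∈ box a b) :
    WithLp.toLp 2 (x.ofLp ⊔ y.ofLp) ∈ box a b := fun i =>
  ⟨le_max_of_le_left (hx i).1, max_le (hx i).2 (hy i).2⟩

lemma inf_mem_box (hx : x ∈ box a b) (hy : y ∈ box a b) :
    WithLp.toLp 2 (x.ofLp ⊓ y.ofLp) ∈ box a b := fun i =>
  ⟨le_min (hx i).1 (hy i).1, min_le_of_left_le (hx i).2⟩

lemma apply_mem_Icc_of_mem_segment {z : EuclideanSpace ℝ ι} (hxy : ∀ i, x i ≤ y i)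
    (hz : z ∈ segment ℝ x y) (i : ι) : z i ∈ Icc (x i) (y i) := by
  obtain ⟨s, t, hs, ht, hst, rfl⟩ := hz
  obtain rfl : s = 1 - t := by linarith
  have hxyi := hxy i
  simp only [PiLp.add_apply, PiLp.smul_apply, smul_eq_mul, mem_Icc]
  constructor <;> nlinarith

end Box

section MeanValue

variable {ι : Type*} [Fintype ι] {X : Set (EuclideanSpace ℝ ι)}
  {F : EuclideanSpace ℝ ι → ℝ} {g : EuclideanSpace ℝ ι → EuclideanSpace ℝ ι}
  {x y : EuclideanSpace ℝ ι}

lemma exists_mem_segment_sub_eq_sum (hX : Convex ℝ X) (hF : ∀ x ∈ X, HasGradientAt F (g x) x)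
    (hx : x ∈ X) (hy : y ∈ X) :
    ∃ z ∈ segment ℝ x y, F y - F x = ∑ i, g z i * (y i - x i) := by
  obtain ⟨z, hz, hFz⟩ :=
    domain_mvt (fun u hu => (hF u hu).hasFDerivAt.hasFDerivWithinAt) hX hx hy
  refine ⟨z, hz, ?_⟩
  simp [hFz, PiLp.inner_apply, mul_comm]

variable (hX : Convex ℝ X) (hF : ∀ x ∈ X, HasGradientAt F (g x) x) {γ : ℝ}
  (hweak : ∀ x ∈ X, ∀ y ∈ X, (∀ i, x i ≤ y i) → ∀ i, γ * g y i ≤ g x i)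
include hX hF hweak

lemma mul_sub_le_sum_of_le (hx : x ∈ X) (hy : y ∈ X) (hxy : ∀ i, x i ≤ y i) :
    γ * (F y - F x) ≤ ∑ i, g x i * (y i - x i) := by
  obtain ⟨z, hz, hFz⟩ := exists_mem_segment_sub_eq_sum hX hF hx hy
  rw [hFz, Finset.mul_sum]
  refine Finset.sum_le_sum fun i _ => ?_
  have hgz := hweak x hx z (hX.segment_subset hx hy hz)
    (fun j => (apply_mem_Icc_of_mem_segment hxy hz j).1) i
  nlinarith [hxy i]

lemma mul_sum_le_sub_of_le (hx : x ∈ X) (hy : y ∈ X) (hxy : ∀ i, x i ≤ y i) :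
    γ * ∑ i, g y i * (y i - x i) ≤ F y - F x := by
  obtain ⟨z, hz, hFz⟩ := exists_mem_segment_sub_eq_sum hX hF hx hy
  rw [hFz, Finset.mul_sum]
  refine Finset.sum_le_sum fun i _ => ?_
  have hgz := hweak z (hX.segment_subset hx hy hz) y hy
    (fun j => (apply_mem_Icc_of_mem_segment hxy hz j).2) i
  nlinarith [hxy i]

end MeanValue

theorem stmt_2_general (n : ℕ) (a b : Fin n → ℝ)
    (X : Set (EuclideanSpace ℝ (Fin n)))
    (hX : X = {x : EuclideanSpace ℝ (Fin n) | ∀ i, x i ∈ Set.Icc (a i) (b i)})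
    (F : EuclideanSpace ℝ (Fin n) → ℝ)
    (g : EuclideanSpace ℝ (Fin n) → EuclideanSpace ℝ (Fin n))
    (hF0 : ∀ x ∈ X, 0 ≤ F x)
    (hdiff : ∀ x ∈ X, HasGradientAt F (g x) x)
    (hmono : ∀ x ∈ X, ∀ y ∈ X, (∀ i, x i ≤ y i) → F x ≤ F y)
    (γ : ℝ) (hγ : 0 < γ)
    (hweak : ∀ x ∈ X, ∀ y ∈ X, (∀ i, x i ≤ y i) → ∀ i, γ * g y i ≤ g x i) :
    ∀ x ∈ X, ∀ y ∈ X,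
      F y - (1 + 1 / γ ^ 2) * F x ≤ (1 / γ) * ∑ i, g x i * (y i - x i) := by
  obtain rfl : X = box a b := hX
  intro x hx y hy
  set p : EuclideanSpace ℝ (Fin n) := WithLp.toLp 2 (x.ofLp ⊔ y.ofLp)
  set q : EuclideanSpace ℝ (Fin n) := WithLp.toLp 2 (x.ofLp ⊓ y.ofLp)
  have hp : p ∈ box a b := sup_mem_box hx hy
  have hq : q ∈ box a b := inf_mem_box hx hy
  have hup := mul_sub_le_sum_of_le convex_box hdiff hweak hx hp fun i => le_max_left _ _
  have hdown := mul_sum_le_sub_of_le convex_box hdiff hweak hq hx fun i => min_le_left _ _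
  have hsplit : ∑ i, g x i * (y i - x i) =
      ∑ i, g x i * (p i - x i) - ∑ i, g x i * (x i - q i) := by
    rw [← Finset.sum_sub_distrib]
    refine Finset.sum_congr rfl fun i _ => ?_
    linear_combination (-g x i) * max_add_min (x i) (y i)
  have hFy : F y ≤ F p := hmono y hy p hp fun i => le_max_right _ _
  have hFq : 0 ≤ F q := hF0 q hq
  have key : γ ^ 2 * (F y - F x) - F x ≤ γ * ∑ i, g x i * (y i - x i) := by
    rw [hsplit, mul_sub]
    linarith [mul_le_mul_of_nonneg_left hup hγ.le, mul_le_mul_of_nonneg_left hFy (sq_nonneg γ)]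
  calc F y - (1 + 1 / γ ^ 2) * F x
      = (γ ^ 2 * (F y - F x) - F x) / γ ^ 2 := by field_simp; ring
    _ ≤ γ * (∑ i, g x i * (y i - x i)) / γ ^ 2 := by gcongr
    _ = 1 / γ * ∑ i, g x i * (y i - x i) := by
      rw [pow_two, mul_div_mul_left _ _ hγ.ne', one_div_mul_eq_div]

/-- For a differentiable, monotone, weakly DR-submodular function `F` with
parameter `γ` on a product of compact intervals `X ⊆ ℝ₊ⁿ` (closed under componentwise
max and min), for all `x, y ∈ X`,
`F y - (1 + 1/γ²) F x ≤ (1/γ) ⟨∇F x, y - x⟩`. -/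
theorem stmt_2 (n : ℕ) (a b : Fin n → ℝ) (ha : ∀ i, 0 ≤ a i)
    (X : Set (EuclideanSpace ℝ (Fin n)))
    (hX : X = {x : EuclideanSpace ℝ (Fin n) | ∀ i, x i ∈ Set.Icc (a i) (b i)})
    (F : EuclideanSpace ℝ (Fin n) → ℝ)
    (g : EuclideanSpace ℝ (Fin n) → EuclideanSpace ℝ (Fin n))
    (hF0 : ∀ x ∈ X, 0 ≤ F x)
    (hdiff : ∀ x ∈ X, HasGradientAt F (g x) x)
    (hmono : ∀ x ∈ X, ∀ y ∈ X, (∀ i, x i ≤ y i) → F x ≤ F y)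
    (γ : ℝ) (hγ : 0 < γ)
    (hweak : ∀ x ∈ X, ∀ y ∈ X, (∀ i, x i ≤ y i) → ∀ i, γ * g y i ≤ g x i) :
    ∀ x ∈ X, ∀ y ∈ X,
      F y - (1 + 1 / γ ^ 2) * F x ≤ (1 / γ) * ∑ i, g x i * (y i - x i) :=
  stmt_2_general n a b X hX F g hF0 hdiff hmono γ hγ hweak
end

section
/- Let f: 2^V → ℝ be a monotone submodular set function with maximum singleton value m = max_{j∈V} f({j}) and f(∅)=0. Then the multilinear extension F of f is m-smooth with respect to the ℓ₁ norm: every entry of the Hessian of F satisfies |[∇²F(x)]_{i,j}| ≤ m for all x ∈ [0,1]ⁿ, hence |yᵀ∇²F(x)y| ≤ m‖y‖₁² for all y. -/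
/-- The multilinear extension `F(x) = ∑_{S ⊆ V} f(S) ∏_{i∈S} xᵢ ∏_{j∉S} (1 − xⱼ)`. -/
noncomputable def multilinearExt (n : ℕ) (f : Finset (Fin n) → ℝ) (x : Fin n → ℝ) : ℝ :=
  ∑ S : Finset (Fin n), f S * ((∏ i ∈ S, x i) * ∏ j ∈ Sᶜ, (1 - x j))

private lemma sum_four {n : ℕ} {i j : Fin n} (hij : i ≠ j) (g : Finset (Fin n) → ℝ) :
    ∑ S : Finset (Fin n), g S =
      ∑ T ∈ ({i,j}ᶜ : Finset (Fin n)).powerset,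
        (g T + g (insert j T) + g (insert i T) + g (insert i (insert j T))) := by
  have hju : j ∉ ({i,j}ᶜ : Finset (Fin n)) := by simp
  have hiu : i ∉ insert j ({i,j}ᶜ : Finset (Fin n)) := by simp [hij]
  have huniv : (Finset.univ : Finset (Finset (Fin n))) =
      (insert i (insert j ({i,j}ᶜ : Finset (Fin n)))).powerset := by
    rw [Finset.powerset_univ.symm]
    congr 1
    ext k; by_cases hk : k = i <;> by_cases hk' : k = j <;> simp [hk, hk']
  rw [huniv, Finset.sum_powerset_insert hiu, Finset.sum_powerset_insert hju,
    Finset.sum_powerset_insert hju, ← Finset.sum_add_distrib, ← Finset.sum_add_distrib,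
    ← Finset.sum_add_distrib]
  exact Finset.sum_congr rfl fun T _ => by ring

private lemma eval_F {n : ℕ} (f : Finset (Fin n) → ℝ) {i j : Fin n} (hij : i ≠ j)
    (x : Fin n → ℝ) (a b : ℝ) :
    multilinearExt n f (Function.update (Function.update x i a) j b) =
      ∑ T ∈ ({i,j}ᶜ : Finset (Fin n)).powerset,
        ((∏ k ∈ T, x k) * ∏ k ∈ ({i,j}ᶜ : Finset (Fin n)) \ T, (1 - x k)) *
        ((1-a)*(1-b) * f T + (1-a)*b * f (insert j T) + a*(1-b) * f (insert i T)
          + a*b * f (insert i (insert j T))) := by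
  classical
  set u : Finset (Fin n) := {i,j}ᶜ with hu
  set z := Function.update (Function.update x i a) j b with hz
  have hzi : z i = a := by simp [hz, Function.update_of_ne hij]
  have hzj : z j = b := by simp [hz]
  have hzk : ∀ k, k ≠ i → k ≠ j → z k = x k := by
    intro k h1 h2
    simp [hz, Function.update_of_ne h2, Function.update_of_ne h1]
  unfold multilinearExt
  rw [sum_four hij]
  apply Finset.sum_congr rfl
  intro T hT
  rw [Finset.mem_powerset] at hT
  have hmemu : ∀ k, k ∈ u ↔ (k ≠ i ∧ k ≠ j) := by intro k; simp [hu]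
  have hiT : i ∉ T := fun h => ((hmemu i).1 (hT h)).1 rfl
  have hjT : j ∉ T := fun h => ((hmemu j).1 (hT h)).2 rfl
  have hiU : i ∉ u \ T := by simp [hu]
  have hjU : j ∉ u \ T := by simp [hu]
  have hiJU : i ∉ insert j (u \ T) := by simp [hu, hij]
  have hijT : i ∉ insert j T := by simp [hij, hiT]
  have hPT : ∏ k ∈ T, z k = ∏ k ∈ T, x k :=
    Finset.prod_congr rfl fun k hk => hzk k ((hmemu k).1 (hT hk)).1 ((hmemu k).1 (hT hk)).2
  have hPU : ∏ k ∈ u \ T, (1 - z k) = ∏ k ∈ u \ T, (1 - x k) := by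
    refine Finset.prod_congr rfl fun k hk => ?_
    have hk' := (hmemu k).1 (Finset.mem_sdiff.1 hk).1
    rw [hzk k hk'.1 hk'.2]
  have c1 : Tᶜ = insert i (insert j (u \ T)) := by
    ext k; by_cases h1 : k = i <;> by_cases h2 : k = j <;>
      simp [h1, h2, hu, hiT, hjT, hij]
  have c2 : (insert j T)ᶜ = insert i (u \ T) := by
    ext k; by_cases h1 : k = i <;> by_cases h2 : k = j <;>
      simp [h1, h2, hu, hiT, hjT, hij, Ne.symm hij]
  have c3 : (insert i T)ᶜ = insert j (u \ T) := by
    ext k; by_cases h1 : k = i <;> by_cases h2 : k = j <;>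
      simp [h1, h2, hu, hiT, hjT, hij, Ne.symm hij]
  have c4 : (insert i (insert j T))ᶜ = u \ T := by
    ext k; by_cases h1 : k = i <;> by_cases h2 : k = j <;>
      simp [h1, h2, hu, hiT, hjT, hij, Ne.symm hij]
  rw [c1, c2, c3, c4, Finset.prod_insert hiJU, Finset.prod_insert hiU,
    Finset.prod_insert hjU,
    Finset.prod_insert hijT, Finset.prod_insert hjT, Finset.prod_insert hiT,
    hzi, hzj, hPT, hPU]
  ring

private lemma entry_bound {n : ℕ} (f : Finset (Fin n) → ℝ)
    (hsub : ∀ A B, f (A ∪ B) + f (A ∩ B) ≤ f A + f B)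
    (hmono : ∀ A B, A ⊆ B → f A ≤ f B)
    (h0 : f ∅ = 0)
    (m : ℝ) (hm : ∀ j, f {j} ≤ m)
    {i j : Fin n} (hij : i ≠ j)
    (x : Fin n → ℝ) (hx : ∀ i, x i ∈ Set.Icc (0 : ℝ) 1) :
    |multilinearExt n f (Function.update (Function.update x i 1) j 1)
        + multilinearExt n f (Function.update (Function.update x i 0) j 0)
        - multilinearExt n f (Function.update (Function.update x i 1) j 0)
        - multilinearExt n f (Function.update (Function.update x i 0) j 1)| ≤ m := by
  classical
  set u : Finset (Fin n) := {i,j}ᶜ with hu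
  set w : Finset (Fin n) → ℝ :=
    fun T => (∏ k ∈ T, x k) * ∏ k ∈ u \ T, (1 - x k) with hw
  have hD : multilinearExt n f (Function.update (Function.update x i 1) j 1)
        + multilinearExt n f (Function.update (Function.update x i 0) j 0)
        - multilinearExt n f (Function.update (Function.update x i 1) j 0)
        - multilinearExt n f (Function.update (Function.update x i 0) j 1)
      = ∑ T ∈ u.powerset,
          w T * (f (insert i (insert j T)) + f T - f (insert i T) - f (insert j T)) := by
    rw [eval_F f hij x 1 1, eval_F f hij x 0 0, eval_F f hij x 1 0, eval_F f hij x 0 1,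
      ← Finset.sum_add_distrib, ← Finset.sum_sub_distrib, ← Finset.sum_sub_distrib]
    exact Finset.sum_congr rfl fun T _ => by simp only [hw]; ring
  have hwnn : ∀ T ∈ u.powerset, 0 ≤ w T := by
    intro T _
    apply mul_nonneg
    · exact Finset.prod_nonneg fun k _ => (hx k).1
    · exact Finset.prod_nonneg fun k _ => by linarith [(hx k).2]
  have hwsum : ∑ T ∈ u.powerset, w T = 1 := by
    have := Finset.prod_add (fun k => x k) (fun k => 1 - x k) u
    simp only [add_sub_cancel] at this
    rw [hw, ← this]
    simp
  have hdb : ∀ T ∈ u.powerset,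
      |f (insert i (insert j T)) + f T - f (insert i T) - f (insert j T)| ≤ m := by
    intro T hT
    rw [Finset.mem_powerset] at hT
    have hiT : i ∉ T := fun h => by have := hT h; simp [hu] at this
    have hjT : j ∉ T := fun h => by have := hT h; simp [hu] at this
    have hun : insert i T ∪ insert j T = insert i (insert j T) := by
      ext k; simp; tauto
    have hin : insert i T ∩ insert j T = T := by
      ext k; constructor
      · intro hk
        simp only [Finset.mem_inter, Finset.mem_insert] at hk
        rcases hk.1 with h | h
        · rcases hk.2 with h' | h'
          · exact absurd (h ▸ h') hij
          · exact absurd (h ▸ h') hiT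
        · exact h
      · intro hk; simp [hk]
    have hupper : f (insert i (insert j T)) + f T - f (insert i T) - f (insert j T) ≤ 0 := by
      have := hsub (insert i T) (insert j T)
      rw [hun, hin] at this
      linarith
    have hstep : f (insert j T) - f T ≤ m := by
      have h1 := hsub {j} T
      have h2 : ({j} : Finset (Fin n)) ∪ T = insert j T := by ext k; simp
      have h3 : ({j} : Finset (Fin n)) ∩ T = ∅ := by
        ext k; simp; rintro rfl; exact hjT
      rw [h2, h3, h0] at h1
      have := hm j
      linarith
    have hmon : f (insert i T) ≤ f (insert i (insert j T)) := by
      apply hmono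
      intro k hk
      simp only [Finset.mem_insert] at hk ⊢
      tauto
    rw [abs_le]
    constructor <;> linarith
  rw [hD]
  calc |∑ T ∈ u.powerset,
          w T * (f (insert i (insert j T)) + f T - f (insert i T) - f (insert j T))|
      ≤ ∑ T ∈ u.powerset,
          |w T * (f (insert i (insert j T)) + f T - f (insert i T) - f (insert j T))| :=
        Finset.abs_sum_le_sum_abs _ _
    _ ≤ ∑ T ∈ u.powerset, w T * m := by
        apply Finset.sum_le_sum
        intro T hT
        rw [abs_mul, abs_of_nonneg (hwnn T hT)]
        exact mul_le_mul_of_nonneg_left (hdb T hT) (hwnn T hT)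
    _ = m := by rw [← Finset.sum_mul, hwsum, one_mul]

/-- For a monotone submodular `f` with `f ∅ = 0` and maximum singleton value
`m`, the multilinear extension `F` is `m`-smooth in the `ℓ₁` norm: every Hessian entry
(as given by the second-difference formula off the diagonal, zero on the diagonal) is
bounded by `m` in absolute value, hence `|yᵀ∇²F(x)y| ≤ m‖y‖₁²`. -/
theorem stmt_9 (n : ℕ) (f : Finset (Fin n) → ℝ)
    (hsub : ∀ A B, f (A ∪ B) + f (A ∩ B) ≤ f A + f B)
    (hmono : ∀ A B, A ⊆ B → f A ≤ f B)
    (h0 : f ∅ = 0)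
    (m : ℝ) (hm : ∀ j, f {j} ≤ m)
    (H : (Fin n → ℝ) → Fin n → Fin n → ℝ)
    (hH : ∀ x i j, H x i j =
      if i = j then 0 else
        multilinearExt n f (Function.update (Function.update x i 1) j 1)
        + multilinearExt n f (Function.update (Function.update x i 0) j 0)
        - multilinearExt n f (Function.update (Function.update x i 1) j 0)
        - multilinearExt n f (Function.update (Function.update x i 0) j 1))
    (x : Fin n → ℝ) (hx : ∀ i, x i ∈ Set.Icc (0 : ℝ) 1) :
    (∀ i j, |H x i j| ≤ m) ∧
      ∀ y : Fin n → ℝ, |∑ i, ∑ j, y i * H x i j * y j| ≤ m * (∑ i, |y i|) ^ 2 := by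
  have hmain : ∀ i j, |H x i j| ≤ m := by
    intro i j
    rw [hH]
    by_cases h : i = j
    · subst h
      rw [if_pos rfl, abs_zero]
      have h1 : f ∅ ≤ f {i} := hmono ∅ {i} (Finset.empty_subset _)
      have := hm i
      linarith [h0 ▸ h1]
    · rw [if_neg h]
      exact entry_bound f hsub hmono h0 m hm h x hx
  refine ⟨hmain, fun y => ?_⟩
  calc |∑ i, ∑ j, y i * H x i j * y j|
      ≤ ∑ i, |∑ j, y i * H x i j * y j| := Finset.abs_sum_le_sum_abs _ _
    _ ≤ ∑ i, ∑ j, |y i * H x i j * y j| :=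
        Finset.sum_le_sum fun i _ => Finset.abs_sum_le_sum_abs _ _
    _ ≤ ∑ i, ∑ j, |y i| * m * |y j| := by
        apply Finset.sum_le_sum; intro i _
        apply Finset.sum_le_sum; intro j _
        rw [abs_mul, abs_mul]
        have h1 : |y i| * |H x i j| ≤ |y i| * m :=
          mul_le_mul_of_nonneg_left (hmain i j) (abs_nonneg _)
        exact mul_le_mul_of_nonneg_right h1 (abs_nonneg _)
    _ = m * (∑ i, |y i|) ^ 2 := by
        simp only [← Finset.sum_mul, ← Finset.mul_sum]
        ring
end
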